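/- arXiv:1806.06706 — 7 statements merged into one kernel-verified Lean document; each statement's English description precedes it below -/
import Mathlib

section
/- Suppose a(t) ≥ 0 and c(t) ≤ 0 on [t₀,∞), with a and c continuous and b continuous. If x₀ solves x' + a(t)x² + b(t)x + c(t) = 0 on [t₀,∞) with x₀(t₀) > 0, then x₀(t) > 0 for all t ≥ t₀. -/
/-!
Writing `p = a x₀ + b`, the Riccati equation reads `x₀' + p x₀ = -c ≥ 0`, a linear
differential inequality. With `P` a primitive of `p`, the function `x₀ e^P` has derivative
`(x₀' + p x₀) e^P ≥ 0`, so it is nondecreasing and stays above its positive initial value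
`x₀ t₀ e^{P t₀}`.
-/

open Set Real

theorem exists_hasDerivAt_of_continuousOn_Ici {p : ℝ → ℝ} {t₀ : ℝ}
    (hp : ContinuousOn p (Ici t₀)) : ∃ P : ℝ → ℝ, ∀ t ≥ t₀, HasDerivAt P (p t) t := by
  -- `p ∘ max t₀` is a continuous extension of `p` to the whole line.
  have hq : Continuous fun t => p (max t₀ t) :=
    hp.comp_continuous (continuous_const.max continuous_id) fun t => le_max_left t₀ t
  refine ⟨fun t => ∫ s in t₀..t, p (max t₀ s), fun t ht => ?_⟩
  simpa [max_eq_right ht] using (hq.integral_hasStrictDerivAt t₀ t).hasDerivAt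

theorem monotoneOn_mul_exp_of_deriv_add_mul_nonneg {x x' p P : ℝ → ℝ} {t₀ : ℝ}
    (hxc : ContinuousOn x (Ici t₀)) (hx : ∀ t > t₀, HasDerivAt x (x' t) t)
    (hP : ∀ t ≥ t₀, HasDerivAt P (p t) t) (h : ∀ t > t₀, 0 ≤ x' t + p t * x t) :
    MonotoneOn (fun t => x t * exp (P t)) (Ici t₀) := by
  have hPc : ContinuousOn P (Ici t₀) := fun t ht => (hP t ht).continuousAt.continuousWithinAt
  refine monotoneOn_of_hasDerivWithinAt_nonneg
    (f' := fun t => x' t * exp (P t) + x t * (exp (P t) * p t)) (convex_Ici t₀) (hxc.mul hPc.rexp)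
    (fun t ht => ?_) (fun t ht => ?_)
  · rw [interior_Ici] at ht
    exact ((hx t ht).mul (hP t (le_of_lt ht)).exp).hasDerivWithinAt
  · rw [interior_Ici] at ht
    calc (0 : ℝ) ≤ (x' t + p t * x t) * exp (P t) := mul_nonneg (h t ht) (exp_pos _).le
      _ = x' t * exp (P t) + x t * (exp (P t) * p t) := by ring

theorem pos_of_deriv_add_mul_nonneg {x x' p : ℝ → ℝ} {t₀ : ℝ} (hp : ContinuousOn p (Ici t₀))
    (hxc : ContinuousOn x (Ici t₀)) (hx : ∀ t > t₀, HasDerivAt x (x' t) t)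
    (h : ∀ t > t₀, 0 ≤ x' t + p t * x t) (hx₀ : 0 < x t₀) : ∀ t ≥ t₀, 0 < x t := by
  intro t ht
  obtain ⟨P, hP⟩ := exists_hasDerivAt_of_continuousOn_Ici hp
  have hmono := monotoneOn_mul_exp_of_deriv_add_mul_nonneg hxc hx hP h
    self_mem_Ici (mem_Ici.2 ht) ht
  have hinit : 0 < x t₀ * exp (P t₀) := mul_pos hx₀ (exp_pos _)
  exact pos_of_mul_pos_left (hinit.trans_le hmono) (exp_pos _).le

theorem stmt2_general (t₀ : ℝ) (a b c x₀ : ℝ → ℝ)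
    (ha : ContinuousOn a (Ici t₀)) (hb : ContinuousOn b (Ici t₀))
    (hc0 : ∀ t ≥ t₀, c t ≤ 0)
    (hx : ∀ t ≥ t₀, HasDerivAt x₀ (-(a t * x₀ t ^ 2 + b t * x₀ t + c t)) t)
    (hx0 : 0 < x₀ t₀) :
    ∀ t ≥ t₀, 0 < x₀ t := by
  have hxc : ContinuousOn x₀ (Ici t₀) := fun t ht => (hx t ht).continuousAt.continuousWithinAt
  refine pos_of_deriv_add_mul_nonneg (p := fun t => a t * x₀ t + b t) ((ha.mul hxc).add hb) hxc
    (fun t ht => hx t ht.le) (fun t ht => ?_) hx0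
  have hlinear : -(a t * x₀ t ^ 2 + b t * x₀ t + c t) + (a t * x₀ t + b t) * x₀ t = -c t := by
    ring
  linarith [hc0 t ht.le]

theorem stmt2 (t₀ : ℝ) (a b c x₀ : ℝ → ℝ)
    (ha : ContinuousOn a (Ici t₀)) (hb : ContinuousOn b (Ici t₀))
    (hc : ContinuousOn c (Ici t₀))
    (ha0 : ∀ t ≥ t₀, 0 ≤ a t) (hc0 : ∀ t ≥ t₀, c t ≤ 0)
    (hx : ∀ t ≥ t₀, HasDerivAt x₀ (-(a t * x₀ t ^ 2 + b t * x₀ t + c t)) t)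
    (hx0 : 0 < x₀ t₀) :
    ∀ t ≥ t₀, 0 < x₀ t :=
  stmt2_general t₀ a b c x₀ ha hb hc0 hx hx0
end

section
/- Let a(t) > 0 and suppose x₀ solves x' + a(t)x² + b(t)x + c(t) = 0 on [t₀,∞) with x₀(t₀) = 0 and x₀(t) ≥ 0 for all t ≥ t₀. Then for all t ≥ t₀: ∫_{t₀}^t a(τ)x₀(τ)dτ ≤ -½∫_{t₀}^t b(τ)dτ + ½·√( (∫_{t₀}^t a(τ)dτ) · ∫_{t₀}^t (b²(τ) - 4a(τ)c(τ))/a(τ) dτ ). -/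
open Set Real MeasureTheory

/-- Cauchy–Schwarz for interval integrals of continuous functions. -/
lemma cs_int (t₀ t : ℝ) (h : t₀ ≤ t) (f g : ℝ → ℝ)
    (hf : ContinuousOn f (Icc t₀ t)) (hg : ContinuousOn g (Icc t₀ t)) :
    (∫ τ in t₀..t, f τ * g τ) ^ 2 ≤
      (∫ τ in t₀..t, f τ ^ 2) * (∫ τ in t₀..t, g τ ^ 2) := by
  have huIcc : uIcc t₀ t = Icc t₀ t := uIcc_of_le h
  have hif : IntervalIntegrable (fun τ => f τ ^ 2) volume t₀ t :=
    ((hf.pow 2).mono huIcc.le).intervalIntegrable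
  have hig : IntervalIntegrable (fun τ => g τ ^ 2) volume t₀ t :=
    ((hg.pow 2).mono huIcc.le).intervalIntegrable
  have hifg : IntervalIntegrable (fun τ => f τ * g τ) volume t₀ t :=
    ((hf.mul hg).mono huIcc.le).intervalIntegrable
  set A := ∫ τ in t₀..t, f τ ^ 2 with hA
  set B := ∫ τ in t₀..t, f τ * g τ with hB
  set C := ∫ τ in t₀..t, g τ ^ 2 with hC
  have key : ∀ lam : ℝ, 0 ≤ A * (lam * lam) + (2 * B) * lam + C := by
    intro lam
    have h1 : (∫ τ in t₀..t, (lam * f τ + g τ) ^ 2) =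
        A * (lam * lam) + (2 * B) * lam + C := by
      have heq : ∀ τ, (lam * f τ + g τ) ^ 2 =
          (lam * lam) * f τ ^ 2 + ((2 * lam) * (f τ * g τ) + g τ ^ 2) := by
        intro τ; ring
      rw [intervalIntegral.integral_congr (g := fun τ =>
        (lam * lam) * f τ ^ 2 + ((2 * lam) * (f τ * g τ) + g τ ^ 2))
        (fun τ _ => heq τ)]
      rw [intervalIntegral.integral_add ((hif.const_mul _))
        (((hifg.const_mul _)).add hig),
        intervalIntegral.integral_add (hifg.const_mul _) hig,
        intervalIntegral.integral_const_mul, intervalIntegral.integral_const_mul]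
      ring
    rw [← h1]
    exact intervalIntegral.integral_nonneg h (fun τ _ => sq_nonneg _)
  have hd := discrim_le_zero key
  rw [discrim] at hd
  nlinarith [hd]

theorem stmt5 (t₀ : ℝ) (a b c x₀ : ℝ → ℝ)
    (ha : ContinuousOn a (Ici t₀)) (hb : ContinuousOn b (Ici t₀))
    (hc : ContinuousOn c (Ici t₀))
    (ha0 : ∀ t ≥ t₀, 0 < a t)
    (hx : ∀ t ≥ t₀, HasDerivAt x₀ (-(a t * x₀ t ^ 2 + b t * x₀ t + c t)) t)
    (hx0 : x₀ t₀ = 0) (hxnn : ∀ t ≥ t₀, 0 ≤ x₀ t) :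
    ∀ t ≥ t₀,
      (∫ τ in t₀..t, a τ * x₀ τ) ≤
        -(1 / 2) * (∫ τ in t₀..t, b τ) +
        (1 / 2) * Real.sqrt ((∫ τ in t₀..t, a τ) *
          ∫ τ in t₀..t, (b τ ^ 2 - 4 * a τ * c τ) / a τ) := by
  intro t ht
  have hIcc : Icc t₀ t ⊆ Ici t₀ := Icc_subset_Ici_self
  have huIcc : uIcc t₀ t = Icc t₀ t := uIcc_of_le ht
  have hx₀c : ContinuousOn x₀ (Ici t₀) := fun s hs =>
    ((hx s hs).differentiableAt).continuousAt.continuousWithinAt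
  have haC : ContinuousOn a (Icc t₀ t) := ha.mono hIcc
  have hbC : ContinuousOn b (Icc t₀ t) := hb.mono hIcc
  have hcC : ContinuousOn c (Icc t₀ t) := hc.mono hIcc
  have hxC : ContinuousOn x₀ (Icc t₀ t) := hx₀c.mono hIcc
  have hane : ∀ τ ∈ Icc t₀ t, a τ ≠ 0 := fun τ hτ => (ha0 τ hτ.1).ne'
  have hapos : ∀ τ ∈ Icc t₀ t, 0 < a τ := fun τ hτ => ha0 τ hτ.1
  -- F = x₀ + b/(2a)
  set F : ℝ → ℝ := fun τ => x₀ τ + b τ / (2 * a τ) with hF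
  have hFC : ContinuousOn F (Icc t₀ t) := by
    apply hxC.add
    exact hbC.div (continuousOn_const.mul haC)
      (fun τ hτ => by have := hapos τ hτ; positivity)
  -- the Riccati quadratic
  set Q : ℝ → ℝ := fun τ => a τ * x₀ τ ^ 2 + b τ * x₀ τ + c τ with hQ
  have hQC : ContinuousOn Q (Icc t₀ t) :=
    ((haC.mul (hxC.pow 2)).add (hbC.mul hxC)).add hcC
  have hQint : IntervalIntegrable Q volume t₀ t :=
    (hQC.mono huIcc.le).intervalIntegrable
  -- FTC
  have hFTC : (∫ τ in t₀..t, -(Q τ)) = x₀ t - x₀ t₀ := by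
    apply intervalIntegral.integral_eq_sub_of_hasDerivAt
    · intro s hs
      rw [huIcc] at hs
      exact hx s hs.1
    · exact hQint.neg
  have hQle : (∫ τ in t₀..t, Q τ) ≤ 0 := by
    rw [intervalIntegral.integral_neg, hx0, sub_zero] at hFTC
    have := hxnn t ht
    linarith [hFTC]
  -- D integrand
  set d : ℝ → ℝ := fun τ => (b τ ^ 2 - 4 * a τ * c τ) / a τ with hdd
  have hdC : ContinuousOn d (Icc t₀ t) :=
    (((hbC.pow 2).sub ((continuousOn_const.mul haC).mul hcC)).div haC hane)
  have hdint : IntervalIntegrable d volume t₀ t :=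
    (hdC.mono huIcc.le).intervalIntegrable
  -- pointwise completing the square
  have hsq : ∀ τ ∈ uIcc t₀ t, a τ * F τ ^ 2 = Q τ + d τ / 4 := by
    intro τ hτ
    rw [huIcc] at hτ
    have h0 := hane τ hτ
    simp only [hF, hQ, hdd]
    field_simp
    ring
  have hPint : IntervalIntegrable (fun τ => a τ * F τ ^ 2) volume t₀ t :=
    ((haC.mul (hFC.pow 2)).mono huIcc.le).intervalIntegrable
  have hPval : (∫ τ in t₀..t, a τ * F τ ^ 2) = (∫ τ in t₀..t, Q τ) + (∫ τ in t₀..t, d τ) / 4 := by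
    rw [intervalIntegral.integral_congr hsq,
      intervalIntegral.integral_add hQint (by simpa using hdint.div_const 4)]
    congr 1
    exact intervalIntegral.integral_div 4 d
  have hPnn : 0 ≤ ∫ τ in t₀..t, a τ * F τ ^ 2 :=
    intervalIntegral.integral_nonneg ht (fun τ hτ => by
      have := hapos τ hτ; positivity)
  have hPle : (∫ τ in t₀..t, a τ * F τ ^ 2) ≤ (∫ τ in t₀..t, d τ) / 4 := by
    rw [hPval]; linarith
  -- Cauchy–Schwarz with f = √a, g = √a * F
  have hsC : ContinuousOn (fun τ => Real.sqrt (a τ)) (Icc t₀ t) :=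
    Real.continuous_sqrt.comp_continuousOn haC
  have hCS := cs_int t₀ t ht (fun τ => Real.sqrt (a τ)) (fun τ => Real.sqrt (a τ) * F τ)
    hsC (hsC.mul hFC)
  have e1 : (∫ τ in t₀..t, Real.sqrt (a τ) * (Real.sqrt (a τ) * F τ)) =
      ∫ τ in t₀..t, a τ * F τ := by
    apply intervalIntegral.integral_congr
    intro τ hτ
    rw [huIcc] at hτ
    have h0 := (hapos τ hτ).le
    simp only []
    rw [← mul_assoc, Real.mul_self_sqrt h0]
  have e2 : (∫ τ in t₀..t, Real.sqrt (a τ) ^ 2) = ∫ τ in t₀..t, a τ := by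
    apply intervalIntegral.integral_congr
    intro τ hτ
    rw [huIcc] at hτ
    exact Real.sq_sqrt (hapos τ hτ).le
  have e3 : (∫ τ in t₀..t, (Real.sqrt (a τ) * F τ) ^ 2) = ∫ τ in t₀..t, a τ * F τ ^ 2 := by
    apply intervalIntegral.integral_congr
    intro τ hτ
    rw [huIcc] at hτ
    show (Real.sqrt (a τ) * F τ) ^ 2 = a τ * F τ ^ 2
    rw [mul_pow, Real.sq_sqrt (hapos τ hτ).le]
  rw [e1, e2, e3] at hCS
  -- evaluate ∫ a F
  have haxint : IntervalIntegrable (fun τ => a τ * x₀ τ) volume t₀ t :=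
    ((haC.mul hxC).mono huIcc.le).intervalIntegrable
  have hbint : IntervalIntegrable b volume t₀ t :=
    (hbC.mono huIcc.le).intervalIntegrable
  have eB : (∫ τ in t₀..t, a τ * F τ) =
      (∫ τ in t₀..t, a τ * x₀ τ) + (∫ τ in t₀..t, b τ) / 2 := by
    have : (∫ τ in t₀..t, a τ * F τ) = ∫ τ in t₀..t, (a τ * x₀ τ + b τ / 2) := by
      apply intervalIntegral.integral_congr
      intro τ hτ
      rw [huIcc] at hτ
      have h0 := hane τ hτ
      simp only [hF]
      field_simp
    rw [this, intervalIntegral.integral_add haxint (by simpa using hbint.div_const 2)]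
    congr 1
    exact intervalIntegral.integral_div 2 b
  -- put it together
  set X := (∫ τ in t₀..t, a τ) * ∫ τ in t₀..t, d τ with hX
  set B2 := (∫ τ in t₀..t, a τ * x₀ τ) + (∫ τ in t₀..t, b τ) / 2 with hB2
  have hanng : 0 ≤ ∫ τ in t₀..t, a τ :=
    intervalIntegral.integral_nonneg ht (fun τ hτ => (hapos τ hτ).le)
  have hkey : B2 ^ 2 ≤ X / 4 := by
    rw [← eB]
    calc (∫ τ in t₀..t, a τ * F τ) ^ 2
        ≤ (∫ τ in t₀..t, a τ) * ∫ τ in t₀..t, a τ * F τ ^ 2 := hCS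
      _ ≤ (∫ τ in t₀..t, a τ) * ((∫ τ in t₀..t, d τ) / 4) := by
          exact mul_le_mul_of_nonneg_left hPle hanng
      _ = X / 4 := by rw [hX]; ring
  have hXnn : 0 ≤ X := by nlinarith [sq_nonneg B2]
  have hfin : B2 ≤ Real.sqrt X / 2 := by
    have h1 : B2 ≤ Real.sqrt (B2 ^ 2) := by
      rw [Real.sqrt_sq_eq_abs]; exact le_abs_self _
    have h2 : Real.sqrt (B2 ^ 2) ≤ Real.sqrt (X / 4) := Real.sqrt_le_sqrt hkey
    have h4 : Real.sqrt (4 : ℝ) = 2 := by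
      rw [show (4:ℝ) = 2 ^ 2 by norm_num, Real.sqrt_sq (by norm_num : (0:ℝ) ≤ 2)]
    have h3 : Real.sqrt (X / 4) = Real.sqrt X / 2 := by
      rw [Real.sqrt_div hXnn, h4]
    exact (h1.trans h2).trans h3.le
  rw [hB2] at hfin
  linarith [hfin]
end

section
/- Let a(t) > 0, c(t) ≥ 0 on [t₀,∞) and let x₁ solve x' + a x² + b x + c = 0 on [t₀,∞) with x₁(t) > 0 for all t ≥ t₀. Then ∫_{t₀}^t a(τ)(x₁(τ) + b(τ)/(2a(τ)))² dτ ≤ x₁(t₀) + ∫_{t₀}^t (b²(τ) - 4a(τ)c(τ))/(4a(τ)) dτ for all t ≥ t₀. -/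
open Set Real

theorem stmt6 (t₀ : ℝ) (a b c x₁ : ℝ → ℝ)
    (ha : ContinuousOn a (Ici t₀)) (hb : ContinuousOn b (Ici t₀))
    (hc : ContinuousOn c (Ici t₀))
    (ha0 : ∀ t ≥ t₀, 0 < a t) (hc0 : ∀ t ≥ t₀, 0 ≤ c t)
    (hx : ∀ t ≥ t₀, HasDerivAt x₁ (-(a t * x₁ t ^ 2 + b t * x₁ t + c t)) t)
    (hxpos : ∀ t ≥ t₀, 0 < x₁ t) :
    ∀ t ≥ t₀,
      (∫ τ in t₀..t, a τ * (x₁ τ + b τ / (2 * a τ)) ^ 2) ≤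
        x₁ t₀ + ∫ τ in t₀..t, (b τ ^ 2 - 4 * a τ * c τ) / (4 * a τ) := by
  intro t ht
  have hx₁cont : ContinuousOn x₁ (Ici t₀) := fun τ hτ =>
    ((hx τ hτ).continuousAt).continuousWithinAt
  have hsub : Icc t₀ t ⊆ Ici t₀ := Icc_subset_Ici_self
  have hane : ∀ τ ∈ Icc t₀ t, a τ ≠ 0 := fun τ hτ => (ha0 τ hτ.1).ne'
  have hg1 : ContinuousOn (fun τ => a τ * (x₁ τ + b τ / (2 * a τ)) ^ 2) (Icc t₀ t) := by
    apply (ha.mono hsub).mul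
    apply ContinuousOn.pow
    exact (hx₁cont.mono hsub).add ((hb.mono hsub).div
      (continuousOn_const.mul (ha.mono hsub)) (fun τ hτ => by
        simpa using hane τ hτ))
  have hg2 : ContinuousOn (fun τ => (b τ ^ 2 - 4 * a τ * c τ) / (4 * a τ)) (Icc t₀ t) := by
    apply ContinuousOn.div
    · exact ((hb.mono hsub).pow 2).sub
        ((continuousOn_const.mul (ha.mono hsub)).mul (hc.mono hsub))
    · exact continuousOn_const.mul (ha.mono hsub)
    · intro τ hτ; simpa using hane τ hτ
  have hi1 : IntervalIntegrable (fun τ => a τ * (x₁ τ + b τ / (2 * a τ)) ^ 2)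
      MeasureTheory.volume t₀ t := by
    apply ContinuousOn.intervalIntegrable
    rwa [uIcc_of_le ht]
  have hi2 : IntervalIntegrable (fun τ => (b τ ^ 2 - 4 * a τ * c τ) / (4 * a τ))
      MeasureTheory.volume t₀ t := by
    apply ContinuousOn.intervalIntegrable
    rwa [uIcc_of_le ht]
  have hder : ∫ τ in t₀..t, -(a τ * x₁ τ ^ 2 + b τ * x₁ τ + c τ) = x₁ t - x₁ t₀ := by
    apply intervalIntegral.integral_eq_sub_of_hasDerivAt
    · intro τ hτ
      rw [uIcc_of_le ht] at hτ
      exact hx τ hτ.1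
    · apply ContinuousOn.intervalIntegrable
      rw [uIcc_of_le ht]
      apply ContinuousOn.neg
      exact (((ha.mono hsub).mul ((hx₁cont.mono hsub).pow 2)).add
        ((hb.mono hsub).mul (hx₁cont.mono hsub))).add (hc.mono hsub)
  have hsplit : ∫ τ in t₀..t, -(a τ * x₁ τ ^ 2 + b τ * x₁ τ + c τ) =
      (∫ τ in t₀..t, (b τ ^ 2 - 4 * a τ * c τ) / (4 * a τ)) -
      ∫ τ in t₀..t, a τ * (x₁ τ + b τ / (2 * a τ)) ^ 2 := by
    rw [← intervalIntegral.integral_sub hi2 hi1]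
    apply intervalIntegral.integral_congr
    intro τ hτ
    rw [uIcc_of_le ht] at hτ
    have h0 := hane τ hτ
    field_simp
    ring
  have := hder
  rw [hsplit] at this
  have hxt : 0 < x₁ t := hxpos t ht
  linarith
end

section
/- Let a₁₂, a₂₁, a₁₁, a₂₂ be continuous on [t₀,∞), set B = a₁₁ - a₂₂. If a₁₂(t) ≥ 0 for t ≥ t₀, ∫_{t₀}^∞ a₁₂(τ)·exp(-∫_{t₀}^τ B(s)ds)dτ = +∞, and -∫_{t₀}^∞ a₂₁(τ)·exp(∫_{t₀}^τ B(s)ds)dτ = +∞, then for every t₁ ≥ t₀ the Riccati equation z' + a₁₂(t)z² + B(t)z - a₂₁(t) = 0 has no solution defined on all of [t₁,∞). -/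
/-!
The substitution `u = -exp (∫_{t₀}^t B) z` turns the Riccati equation into `u' = p u² + r` with
`p = a₁₂ exp (-∫ B) ≥ 0` and `r = -a₂₁ exp (∫ B)`, and both `∫ p` and `∫ r` diverge to `+∞`.
Integrating, `u t ≥ u t₁ + ∫_{t₁}^t r + F t` with `F = ∫_{t₁}^t p u² ≥ 0`, so eventually
`u ≥ 1 + F`. Then `F' = p u² ≥ p (1 + F)²`, i.e. `(-(1 + F)⁻¹)' ≥ p`, which bounds `∫_T^t p` by
`(1 + F T)⁻¹` and contradicts `∫ p = +∞`.
-/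

open Set Real Filter MeasureTheory intervalIntegral

section IciPrimitive

variable {f : ℝ → ℝ} {a : ℝ}

lemma ContinuousOn.intervalIntegrable_of_Ici (hf : ContinuousOn f (Ici a)) {b c : ℝ}
    (hb : a ≤ b) (hc : a ≤ c) : IntervalIntegrable f volume b c :=
  (hf.mono fun _ hx => le_trans (le_min hb hc) hx.1).intervalIntegrable

lemma ContinuousOn.hasDerivAt_integral_of_Ici (hf : ContinuousOn f (Ici a)) {t : ℝ}
    (ht : a < t) : HasDerivAt (fun u => ∫ s in a..u, f s) (f t) t :=
  integral_hasDerivAt_right (hf.intervalIntegrable_of_Ici le_rfl ht.le)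
    ((hf.mono Ioi_subset_Ici_self).stronglyMeasurableAtFilter isOpen_Ioi t ht)
    (hf.continuousAt (Ici_mem_nhds ht))

lemma ContinuousOn.integral_Ici (hf : ContinuousOn f (Ici a)) :
    ContinuousOn (fun t => ∫ s in a..t, f s) (Ici a) := by
  intro t ht
  have hle : a ≤ t + 1 := by linarith [mem_Ici.1 ht]
  have hcont := continuousOn_primitive_interval'
    (hf.intervalIntegrable_of_Ici le_rfl hle) left_mem_uIcc
  rw [uIcc_of_le hle] at hcont
  exact (hcont t ⟨ht, by linarith⟩).mono_of_mem_nhdsWithin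
    (inter_mem_nhdsWithin (Ici a) (Iic_mem_nhds (lt_add_one t)))

lemma tendsto_integral_atTop_rebase (hf : ContinuousOn f (Ici a)) {b : ℝ} (hab : a ≤ b)
    (h : Tendsto (fun t => ∫ s in a..t, f s) atTop atTop) :
    Tendsto (fun t => ∫ s in b..t, f s) atTop atTop := by
  refine (tendsto_atTop_add_const_right _ (-∫ s in a..b, f s) h).congr' ?_
  filter_upwards [eventually_ge_atTop a] with t ht
  rw [← sub_eq_add_neg, integral_interval_sub_left (hf.intervalIntegrable_of_Ici le_rfl ht)
    (hf.intervalIntegrable_of_Ici le_rfl hab)]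

end IciPrimitive

lemma integral_le_inv_of_mul_sq_le_deriv {p G G' : ℝ → ℝ} {a b : ℝ} (hab : a ≤ b)
    (hG : ContinuousOn G (Icc a b)) (hG_pos : ∀ x ∈ Icc a b, 0 < G x)
    (hG' : ∀ x ∈ Ioo a b, HasDerivAt G (G' x) x) (hp : IntegrableOn p (Icc a b))
    (hle : ∀ x ∈ Ioo a b, p x * G x ^ 2 ≤ G' x) :
    ∫ x in a..b, p x ≤ (G a)⁻¹ := by
  have hne : ∀ x ∈ Icc a b, G x ≠ 0 := fun x hx => (hG_pos x hx).ne'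
  have hbound := integral_le_sub_of_hasDeriv_right_of_le hab (g := fun x => -(G x)⁻¹)
    (g' := fun x => G' x / G x ^ 2) (hG.inv₀ hne).neg
    (fun x hx => (((hG' x hx).inv (hne x (Ioo_subset_Icc_self hx))).neg.congr_deriv
      (by ring)).hasDerivWithinAt)
    hp (fun x hx => by
      rw [le_div_iff₀ (pow_pos (hG_pos x (Ioo_subset_Icc_self hx)) 2)]
      exact hle x hx)
  have := inv_pos.2 (hG_pos b (right_mem_Icc.2 hab))
  linarith

theorem false_of_mul_sq_add_le_deriv {p r u u' : ℝ → ℝ} {a t₁ : ℝ}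
    (hp : ContinuousOn p (Ici a)) (hr : ContinuousOn r (Ici a)) (hp_nonneg : ∀ t ≥ a, 0 ≤ p t)
    (hP : Tendsto (fun t => ∫ s in a..t, p s) atTop atTop)
    (hR : Tendsto (fun t => ∫ s in a..t, r s) atTop atTop) (ht₁ : a ≤ t₁)
    (hu : ContinuousOn u (Ici t₁)) (hu' : ∀ t > t₁, HasDerivAt u (u' t) t)
    (hle : ∀ t > t₁, p t * u t ^ 2 + r t ≤ u' t) : False := by
  have hIci : Ici t₁ ⊆ Ici a := Ici_subset_Ici.2 ht₁
  set g := fun t => p t * u t ^ 2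
  have hg : ContinuousOn g (Ici t₁) := (hp.mono hIci).mul (hu.pow 2)
  set F := fun t => ∫ s in t₁..t, g s
  have hF_nonneg : ∀ t ≥ t₁, 0 ≤ F t := fun t ht =>
    integral_nonneg ht fun x hx => mul_nonneg (hp_nonneg x (ht₁.trans hx.1)) (sq_nonneg _)
  have hgrowth : ∀ t ≥ t₁, u t₁ + (∫ s in t₁..t, r s) + F t ≤ u t := by
    intro t ht
    have hint := integral_le_sub_of_hasDeriv_right_of_le (φ := fun x => g x + r x) ht
      (hu.mono Icc_subset_Ici_self)
      (fun x hx => (hu' x hx.1).hasDerivWithinAt)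
      ((hg.add (hr.mono hIci)).mono Icc_subset_Ici_self).integrableOn_Icc
      (fun x hx => hle x hx.1)
    rw [integral_add (hg.intervalIntegrable_of_Ici le_rfl ht)
      ((hr.mono hIci).intervalIntegrable_of_Ici le_rfl ht)] at hint
    linarith
  obtain ⟨T, hT⟩ := (((tendsto_integral_atTop_rebase hr ht₁ hR).eventually_ge_atTop
    (1 - u t₁)).and (eventually_ge_atTop t₁)).exists_forall_of_atTop
  have hT₁ : t₁ ≤ T := (hT T le_rfl).2
  have hu_ge : ∀ t ≥ T, 1 + F t ≤ u t := fun t ht => by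
    linarith [hgrowth t (hT₁.trans ht), (hT t ht).1]
  have hbounded : ∀ t ≥ T, ∫ s in T..t, p s ≤ (1 + F T)⁻¹ := fun t ht =>
    integral_le_inv_of_mul_sq_le_deriv ht (G := fun t => 1 + F t) (G' := g)
      (continuousOn_const.add (hg.integral_Ici.mono (Icc_subset_Ici_iff ht |>.2 hT₁)))
      (fun x hx => by linarith [hF_nonneg x (hT₁.trans hx.1)])
      (fun x hx => (hg.hasDerivAt_integral_of_Ici (hT₁.trans_lt hx.1)).const_add 1)
      ((hp.mono (Icc_subset_Ici_iff ht |>.2 (ht₁.trans hT₁))).integrableOn_Icc)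
      (fun x hx => mul_le_mul_of_nonneg_left
        (pow_le_pow_left₀ (by linarith [hF_nonneg x (hT₁.trans hx.1.le)]) (hu_ge x hx.1.le) 2)
        (hp_nonneg x (ht₁.trans (hT₁.trans hx.1.le))))
  obtain ⟨t, hbig, ht⟩ := (((tendsto_integral_atTop_rebase hp (ht₁.trans hT₁) hP)
    |>.eventually_gt_atTop (1 + F T)⁻¹).and (eventually_ge_atTop T)).exists
  linarith [hbounded t ht]

lemma hasDerivAt_neg_exp_mul_of_riccati {z I : ℝ → ℝ} {a β c t : ℝ} (hI : HasDerivAt I β t)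
    (hz : HasDerivAt z (-(a * z t ^ 2 + β * z t - c)) t) :
    HasDerivAt (fun s => -(exp (I s) * z s))
      (a * exp (-I t) * (-(exp (I t) * z t)) ^ 2 + -(c * exp (I t))) t := by
  refine (hI.exp.mul hz).neg.congr_deriv ?_
  rw [exp_neg]
  field_simp
  ring

theorem stmt8 (t₀ : ℝ) (a₁₁ a₁₂ a₂₁ a₂₂ : ℝ → ℝ)
    (h11 : ContinuousOn a₁₁ (Ici t₀)) (h12 : ContinuousOn a₁₂ (Ici t₀))
    (h21 : ContinuousOn a₂₁ (Ici t₀)) (h22 : ContinuousOn a₂₂ (Ici t₀))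
    (B : ℝ → ℝ) (hB : B = fun t => a₁₁ t - a₂₂ t)
    (ha12 : ∀ t ≥ t₀, 0 ≤ a₁₂ t)
    (hdiv1 : Tendsto (fun t => ∫ τ in t₀..t,
        a₁₂ τ * Real.exp (-∫ s in t₀..τ, B s)) atTop atTop)
    (hdiv2 : Tendsto (fun t => -∫ τ in t₀..t,
        a₂₁ τ * Real.exp (∫ s in t₀..τ, B s)) atTop atTop) :
    ∀ t₁ ≥ t₀, ¬ ∃ z : ℝ → ℝ, ∀ t ≥ t₁,
      HasDerivAt z (-(a₁₂ t * z t ^ 2 + B t * z t - a₂₁ t)) t := by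
  rintro t₁ ht₁ ⟨z, hz⟩
  have hB_cont : ContinuousOn B (Ici t₀) := hB ▸ h11.sub h22
  have hI : ContinuousOn (fun t => ∫ s in t₀..t, B s) (Ici t₀) := hB_cont.integral_Ici
  have hz_cont : ContinuousOn z (Ici t₁) := fun t ht => (hz t ht).continuousAt.continuousWithinAt
  exact false_of_mul_sq_add_le_deriv (p := fun t => a₁₂ t * exp (-∫ s in t₀..t, B s))
    (r := fun t => -(a₂₁ t * exp (∫ s in t₀..t, B s))) (h12.mul hI.neg.rexp) (h21.mul hI.rexp).neg
    (fun t ht => mul_nonneg (ha12 t ht) (exp_pos _).le) hdiv1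
    (by simpa only [intervalIntegral.integral_neg] using hdiv2) ht₁
    ((hI.mono (Ici_subset_Ici.2 ht₁)).rexp.mul hz_cont).neg
    (fun t ht => hasDerivAt_neg_exp_mul_of_riccati
      (hB_cont.hasDerivAt_integral_of_Ici (ht₁.trans_lt ht)) (hz t ht.le))
    (fun t _ => le_rfl)
end

section
/- Suppose Z solves z' + U(t)z² + W(t) = 0 on [t₁,∞), where U(t) ≥ 0, ∫_{t₁}^∞ U = +∞, ∫_{t₁}^∞ W = +∞, and Z(t) > ∫_{t₁}^t W(τ)dτ for all t ≥ t₁ with Z(t₁) > 0. Then a contradiction follows; i.e., no such Z exists. -/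
open Set Real Filter

theorem stmt9 (t₁ : ℝ) (U W Z : ℝ → ℝ)
    (hU : ContinuousOn U (Ici t₁)) (hW : ContinuousOn W (Ici t₁))
    (hU0 : ∀ t ≥ t₁, 0 ≤ U t)
    (hUdiv : Tendsto (fun t => ∫ τ in t₁..t, U τ) atTop atTop)
    (hWdiv : Tendsto (fun t => ∫ τ in t₁..t, W τ) atTop atTop)
    (hZ : ∀ t ≥ t₁, HasDerivAt Z (-(U t * Z t ^ 2 + W t)) t)
    (hZgt : ∀ t ≥ t₁, (∫ τ in t₁..t, W τ) < Z t)
    (hZpos : 0 < Z t₁) :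
    False := by
  -- pick t ≥ t₁ with ∫_{t₁}^t W ≥ Z t₁
  have h1 : ∀ᶠ t in atTop, Z t₁ ≤ ∫ τ in t₁..t, W τ := hWdiv.eventually_ge_atTop _
  have h2 : ∀ᶠ t in atTop, t₁ ≤ t := eventually_ge_atTop t₁
  obtain ⟨t, hWt, ht⟩ := (h1.and h2).exists
  -- Z is continuous on Ici t₁
  have hZc : ContinuousOn Z (Ici t₁) := fun s hs =>
    (hZ s hs).continuousAt.continuousWithinAt
  have hsub : Icc t₁ t ⊆ Ici t₁ := Icc_subset_Ici_self
  have huIcc : uIcc t₁ t = Icc t₁ t := uIcc_of_le ht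
  have hUZc : ContinuousOn (fun τ => U τ * Z τ ^ 2) (Icc t₁ t) :=
    ((hU.mono hsub).mul ((hZc.mono hsub).pow 2))
  have hUZint : IntervalIntegrable (fun τ => U τ * Z τ ^ 2) MeasureTheory.volume t₁ t := by
    apply ContinuousOn.intervalIntegrable
    rwa [huIcc]
  have hWint : IntervalIntegrable W MeasureTheory.volume t₁ t := by
    apply ContinuousOn.intervalIntegrable
    rw [huIcc]; exact hW.mono hsub
  -- FTC
  have hftc : ∫ τ in t₁..t, -(U τ * Z τ ^ 2 + W τ) = Z t - Z t₁ := by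
    apply intervalIntegral.integral_eq_sub_of_hasDerivAt
    · intro s hs
      rw [huIcc] at hs
      exact hZ s hs.1
    · apply ContinuousOn.intervalIntegrable
      rw [huIcc]
      exact (hUZc.add (hW.mono hsub)).neg
  rw [intervalIntegral.integral_neg, intervalIntegral.integral_add hUZint hWint] at hftc
  -- nonnegativity of ∫ U Z²
  have hnn : 0 ≤ ∫ τ in t₁..t, U τ * Z τ ^ 2 := by
    apply intervalIntegral.integral_nonneg ht
    intro s hs
    exact mul_nonneg (hU0 s hs.1) (sq_nonneg _)
  have hZt := hZgt t ht
  -- combine: ∫UZ² + ∫W = Z t₁ - Z t, so Z t₁ ≥ Z t + ∫W > 2∫W ≥ 2 Z t₁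
  nlinarith [hftc, hnn, hZt, hWt, hZpos]
end

section
/- Let r : ℝ → ℝ be continuous on [t₀,∞). If every solution of φ'' + r(t)φ = 0 tends to 0 as t → +∞, then for every nontrivial solution φ, the derivative φ' is unbounded on [t₀,∞). -/
/-!
Pick t₁ ≥ t₀ with φ(t₁) ≠ 0 and let ψ solve the equation with ψ(t₁) = 0, ψ'(t₁) = 1. The
Wronskian φψ' − ψφ' is then the constant φ(t₁) ≠ 0, so (φψ)' = φ(t₁) + 2ψφ'. Both φ and ψ tend
to 0; if φ' were bounded, (φψ)' would tend to φ(t₁) while φψ tends to 0, which the mean value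
theorem forbids.

The solution ψ exists on all of ℝ because the equation is linear: for x' = A(t)x the
Picard–Lindelöf step length depends only on a bound for ‖A‖, not on the initial value, so local
solutions can be glued along any compact interval.
-/

open Set Filter Topology
open scoped NNReal

section IntegralCurve

variable {E : Type*} [NormedAddCommGroup E] [NormedSpace ℝ E] {v : ℝ → E → E} {f g : ℝ → E}

theorem IsIntegralCurveOn.congr {s : Set ℝ} (hf : IsIntegralCurveOn f v s) (hgf : EqOn g f s) :
    IsIntegralCurveOn g v s := fun t ht ↦ by
  rw [hgf ht]
  exact (hf t ht).congr hgf (hgf ht)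

theorem IsIntegralCurveOn.union_of_isClosed {s s' : Set ℝ} (hs : IsClosed s) (hs' : IsClosed s')
    (hf : IsIntegralCurveOn f v s) (hf' : IsIntegralCurveOn f v s') :
    IsIntegralCurveOn f v (s ∪ s') := by
  have within {u : Set ℝ} (hu : IsClosed u) (hfu : IsIntegralCurveOn f v u) (t : ℝ) :
      HasDerivWithinAt f (v t (f t)) u t := by
    by_cases ht : t ∈ u
    · exact hfu t ht
    · exact HasFDerivWithinAt.of_notMem_closure (by rwa [hu.closure_eq])
  exact fun t _ ↦ (within hs hf t).union (within hs' hf' t)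

theorem IsIntegralCurveOn.exists_glue_Icc {a m b : ℝ} (ham : a ≤ m) (hmb : m ≤ b)
    (hf : IsIntegralCurveOn f v (Icc a m)) (hg : IsIntegralCurveOn g v (Icc m b))
    (hfg : f m = g m) :
    ∃ h : ℝ → E, EqOn h f (Icc a m) ∧ EqOn h g (Icc m b) ∧
      IsIntegralCurveOn h v (Icc a b) := by
  classical
  have hhf : EqOn ((Iic m).piecewise f g) f (Icc a m) := fun t ht ↦
    piecewise_eq_of_mem _ _ _ (mem_Iic.2 ht.2)
  have hhg : EqOn ((Iic m).piecewise f g) g (Icc m b) := fun t ht ↦ by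
    rcases ht.1.eq_or_lt with rfl | hlt
    · exact (piecewise_eq_of_mem _ _ _ (mem_Iic.2 le_rfl)).trans hfg
    · exact piecewise_eq_of_notMem _ _ _ (notMem_Iic.2 hlt)
  refine ⟨_, hhf, hhg, ?_⟩
  rw [← Icc_union_Icc_eq_Icc ham hmb]
  exact (hf.congr hhf).union_of_isClosed isClosed_Icc isClosed_Icc (hg.congr hhg)

end IntegralCurve

section LinearODE

variable {E : Type*} [NormedAddCommGroup E] [NormedSpace ℝ E] {A : ℝ → E →L[ℝ] E}

theorem IsIntegralCurveOn.eqOn_Icc_of_eq {a b t₀ : ℝ} {f g : ℝ → E}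
    (hA : ContinuousOn A (Icc a b)) (ht₀ : t₀ ∈ Ioo a b)
    (hf : IsIntegralCurveOn f (fun t x ↦ A t x) (Icc a b))
    (hg : IsIntegralCurveOn g (fun t x ↦ A t x) (Icc a b)) (hfg : f t₀ = g t₀) :
    EqOn f g (Icc a b) := by
  obtain ⟨K, hK⟩ := (isCompact_Icc.image_of_continuousOn hA.nnnorm).bddAbove
  have hlip (t : ℝ) (ht : t ∈ Ioo a b) : LipschitzWith K (A t) :=
    (A t).lipschitz.weaken (hK (mem_image_of_mem _ (Ioo_subset_Icc_self ht)))
  have hderiv {f : ℝ → E} (hf : IsIntegralCurveOn f (fun t x ↦ A t x) (Icc a b)) (t : ℝ)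
      (ht : t ∈ Ioo a b) : HasDerivAt f (A t (f t)) t :=
    (hf t (Ioo_subset_Icc_self ht)).hasDerivAt (Icc_mem_nhds ht.1 ht.2)
  exact ODE_solution_unique_of_mem_Icc (s := fun _ ↦ univ)
    (fun t ht ↦ (hlip t ht).lipschitzOnWith)
    ht₀ hf.continuousOn (hderiv hf) (fun _ _ ↦ trivial) hg.continuousOn (hderiv hg)
    (fun _ _ ↦ trivial) hfg

variable [CompleteSpace E]

theorem exists_isIntegralCurveOn_Icc_of_mul_le {a s b : ℝ} (hs : s ∈ Icc a b)
    (hA : ContinuousOn A (Icc a b)) {K : ℝ≥0} (hK : ∀ t ∈ Icc a b, ‖A t‖₊ ≤ K)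
    (hab : 2 * K * (b - a) ≤ 1) (y : E) :
    ∃ f : ℝ → E, f s = y ∧ IsIntegralCurveOn f (fun t x ↦ A t x) (Icc a b) := by
  -- On the ball of radius ρ = ‖y‖ + 1 the field is bounded by 2Kρ, so ρ cancels in the
  -- Picard–Lindelöf time condition.
  set ρ : ℝ≥0 := ‖y‖₊ + 1
  have hpl : IsPicardLindelof (fun t x ↦ A t x) (⟨s, hs⟩ : Icc a b) y ρ 0 (2 * K * ρ) K := by
    refine ⟨fun t ht ↦ ((A t).lipschitz.weaken (hK t ht)).lipschitzOnWith,
      fun x _ ↦ hA.clm_apply continuousOn_const, fun t ht x hx ↦ ?_, ?_⟩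
    · have hx' : ‖x‖ ≤ 2 * ρ := by
        have := norm_le_norm_add_norm_sub' x y
        rw [mem_closedBall_iff_norm] at hx
        simp only [ρ, NNReal.coe_add, coe_nnnorm, NNReal.coe_one] at hx ⊢
        linarith [norm_nonneg y]
      calc ‖A t x‖ ≤ ‖A t‖ * ‖x‖ := (A t).le_opNorm x
        _ ≤ K * (2 * ρ) := by gcongr; exact hK t ht
        _ = _ := by push_cast; ring
    · have hmax : max (b - s) (s - a) ≤ b - a := max_le (by linarith [hs.1]) (by linarith [hs.2])
      push_cast
      calc 2 * K * ρ * max (b - s) (s - a) ≤ 2 * K * ρ * (b - a) := by gcongr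
        _ = 2 * K * (b - a) * ρ := by ring
        _ ≤ 1 * ρ := by gcongr
        _ = ρ - 0 := by ring
  exact hpl.exists_eq_forall_mem_Icc_hasDerivWithinAt₀

theorem IsIntegralCurveOn.exists_extension_Icc {f : ℝ → E} {a b h : ℝ} (hab : a ≤ b) (hh : 0 ≤ h)
    (hf : IsIntegralCurveOn f (fun t x ↦ A t x) (Icc a b))
    (hA : ContinuousOn A (Icc (a - h) (b + h))) {K : ℝ≥0}
    (hK : ∀ t ∈ Icc (a - h) (b + h), ‖A t‖₊ ≤ K) (hKh : 2 * K * h ≤ 1) :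
    ∃ g : ℝ → E, EqOn g f (Icc a b) ∧
      IsIntegralCurveOn g (fun t x ↦ A t x) (Icc (a - h) (b + h)) := by
  have hright : Icc b (b + h) ⊆ Icc (a - h) (b + h) := Icc_subset_Icc (by linarith) le_rfl
  have hleft : Icc (a - h) a ⊆ Icc (a - h) (b + h) := Icc_subset_Icc le_rfl (by linarith)
  obtain ⟨fr, hfr, hfr'⟩ := exists_isIntegralCurveOn_Icc_of_mul_le
    (left_mem_Icc.2 (by linarith)) (hA.mono hright) (fun t ht ↦ hK t (hright ht))
    (by rwa [add_sub_cancel_left]) (f b)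
  obtain ⟨f₁, hf₁, -, hf₁'⟩ := hf.exists_glue_Icc hab (by linarith) hfr' hfr.symm
  obtain ⟨fl, hfl, hfl'⟩ := exists_isIntegralCurveOn_Icc_of_mul_le
    (right_mem_Icc.2 (by linarith)) (hA.mono hleft) (fun t ht ↦ hK t (hleft ht))
    (by rwa [sub_sub_cancel]) (f₁ a)
  obtain ⟨g, -, hg, hg'⟩ := hfl'.exists_glue_Icc (by linarith) (by linarith) hf₁' hfl
  exact ⟨g, fun t ht ↦ (hg ⟨ht.1, ht.2.trans (by linarith)⟩).trans (hf₁ ht), hg'⟩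

theorem exists_isIntegralCurveOn_Icc_sub_add {s T : ℝ} (hT : 0 ≤ T)
    (hA : ContinuousOn A (Icc (s - T) (s + T))) (y : E) :
    ∃ f : ℝ → E, f s = y ∧ IsIntegralCurveOn f (fun t x ↦ A t x) (Icc (s - T) (s + T)) := by
  obtain ⟨K, hK⟩ := (isCompact_Icc.image_of_continuousOn hA.nnnorm).bddAbove
  obtain ⟨N, hN⟩ := exists_nat_ge (2 * K * T)
  set δ := T / (N + 1)
  have hδ : 0 ≤ δ := by positivity
  have hNδ : (N + 1) * δ = T := mul_div_cancel₀ _ (by positivity)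
  have grow : ∀ n ≤ N + 1, ∃ f : ℝ → E, f s = y ∧
      IsIntegralCurveOn f (fun t x ↦ A t x) (Icc (s - n * δ) (s + n * δ)) := by
    intro n
    induction n with
    | zero =>
      intro _
      have hss : Icc s s ⊆ Icc (s - T) (s + T) := Icc_subset_Icc (by linarith) (by linarith)
      simpa using exists_isIntegralCurveOn_Icc_of_mul_le (left_mem_Icc.2 le_rfl)
        (hA.mono hss) (fun t ht ↦ hK (mem_image_of_mem _ (hss ht))) (by simp) y
    | succ n ih =>
      intro hn
      obtain ⟨f, hfs, hf⟩ := ih (by omega)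
      have hnδ : (n + 1 : ℝ) * δ ≤ T := by
        rw [← hNδ]; gcongr; exact_mod_cast Nat.le_of_succ_le_succ hn
      have hsub : Icc (s - n * δ - δ) (s + n * δ + δ) ⊆ Icc (s - T) (s + T) :=
        Icc_subset_Icc (by linarith) (by linarith)
      obtain ⟨g, hgf, hg⟩ := hf.exists_extension_Icc (by nlinarith) hδ (hA.mono hsub)
        (fun t ht ↦ hK (mem_image_of_mem _ (hsub ht)))
        (by
          rw [show 2 * K * δ = 2 * K * T / (N + 1) by ring, div_le_one (by positivity)]
          linarith)
      refine ⟨g, (hgf ⟨by nlinarith, by nlinarith⟩).trans hfs, ?_⟩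
      convert hg using 2 <;> push_cast <;> ring
  simpa [hNδ] using grow (N + 1) le_rfl

theorem exists_isIntegralCurve_of_continuous (hA : Continuous A) (s : ℝ) (y : E) :
    ∃ f : ℝ → E, f s = y ∧ IsIntegralCurve f (fun t x ↦ A t x) := by
  choose f hfs hf using fun n : ℕ ↦
    exists_isIntegralCurveOn_Icc_sub_add (s := s) (T := n + 1) (by positivity) hA.continuousOn y
  have agree {m n : ℕ} (hmn : m ≤ n) : EqOn (f m) (f n) (Icc (s - (m + 1)) (s + (m + 1))) := by
    have hsub : Icc (s - (m + 1)) (s + (m + 1)) ⊆ Icc (s - (n + 1)) (s + (n + 1)) := by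
      have : (m : ℝ) ≤ n := by exact_mod_cast hmn
      exact Icc_subset_Icc (by linarith) (by linarith)
    exact (hf m).eqOn_Icc_of_eq hA.continuousOn ⟨by linarith, by linarith⟩
      ((hf n).mono hsub) ((hfs m).trans (hfs n).symm)
  set F : ℝ → E := fun t ↦ f ⌈|t - s|⌉₊ t
  have hF (n : ℕ) : EqOn F (f n) (Icc (s - (n + 1)) (s + (n + 1))) := by
    intro t ht
    have hle : |t - s| ≤ ⌈|t - s|⌉₊ := Nat.le_ceil _
    rcases le_total ⌈|t - s|⌉₊ n with h | h
    · exact agree h ⟨by linarith [neg_abs_le (t - s)], by linarith [le_abs_self (t - s)]⟩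
    · exact (agree h ht).symm
  refine ⟨F, (hF 0 ⟨by linarith, by linarith⟩).trans (hfs 0), fun t ↦ ?_⟩
  set n := ⌈|t - s|⌉₊
  have hle : |t - s| ≤ n := Nat.le_ceil _
  have hnhds : Icc (s - (n + 1)) (s + (n + 1)) ∈ 𝓝 t :=
    Icc_mem_nhds (by linarith [neg_abs_le (t - s)]) (by linarith [le_abs_self (t - s)])
  rw [hF n (mem_of_mem_nhds hnhds)]
  exact ((hf n t (mem_of_mem_nhds hnhds)).hasDerivAt hnhds).congr_of_eventuallyEq
    (eventuallyEq_of_mem hnhds (hF n))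

end LinearODE

def companion (q : ℝ → ℝ) (t : ℝ) : ℝ × ℝ →L[ℝ] ℝ × ℝ :=
  (ContinuousLinearMap.snd ℝ ℝ ℝ).prod 0 -
    q t • (0 : ℝ × ℝ →L[ℝ] ℝ).prod (ContinuousLinearMap.fst ℝ ℝ ℝ)

theorem companion_apply (q : ℝ → ℝ) (t : ℝ) (x : ℝ × ℝ) :
    companion q t x = (x.2, -(q t * x.1)) := by
  simp [companion]

theorem continuous_companion {q : ℝ → ℝ} (hq : Continuous q) : Continuous (companion q) :=
  continuous_const.sub (hq.smul continuous_const)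

theorem exists_hasDerivAt_deriv_eq_neg_mul {q : ℝ → ℝ} (hq : Continuous q) (s y₀ y₁ : ℝ) :
    ∃ ψ : ℝ → ℝ, ψ s = y₀ ∧ deriv ψ s = y₁ ∧
      ∀ t, HasDerivAt ψ (deriv ψ t) t ∧ HasDerivAt (deriv ψ) (-(q t * ψ t)) t := by
  obtain ⟨F, hFs, hF⟩ := exists_isIntegralCurve_of_continuous (continuous_companion hq) s (y₀, y₁)
  have hF' (t : ℝ) : HasDerivAt F ((F t).2, -(q t * (F t).1)) t := by
    simpa only [companion_apply] using hF t
  have hfst (t : ℝ) : HasDerivAt (fun t ↦ (F t).1) (F t).2 t :=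
    (ContinuousLinearMap.fst ℝ ℝ ℝ).hasFDerivAt.comp_hasDerivAt t (hF' t)
  have hderiv : deriv (fun t ↦ (F t).1) = fun t ↦ (F t).2 := funext fun t ↦ (hfst t).deriv
  refine ⟨fun t ↦ (F t).1, by simp [hFs], by simp [hderiv, hFs], fun t ↦ ⟨?_, ?_⟩⟩
  · rw [hderiv]; exact hfst t
  · rw [hderiv]
    exact (ContinuousLinearMap.snd ℝ ℝ ℝ).hasFDerivAt.comp_hasDerivAt t (hF' t)

theorem wronskian_eq_of_le {r φ φ' ψ ψ' : ℝ → ℝ} {t₀ : ℝ}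
    (hφ : ∀ t ≥ t₀, HasDerivAt φ (φ' t) t) (hφ' : ∀ t ≥ t₀, HasDerivAt φ' (-(r t * φ t)) t)
    (hψ : ∀ t ≥ t₀, HasDerivAt ψ (ψ' t) t) (hψ' : ∀ t ≥ t₀, HasDerivAt ψ' (-(r t * ψ t)) t)
    {t : ℝ} (ht : t₀ ≤ t) :
    φ t * ψ' t - ψ t * φ' t = φ t₀ * ψ' t₀ - ψ t₀ * φ' t₀ := by
  have hW : ∀ u ≥ t₀, HasDerivAt (fun u ↦ φ u * ψ' u - ψ u * φ' u) 0 u := fun u hu ↦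
    (((hφ u hu).mul (hψ' u hu)).sub ((hψ u hu).mul (hφ' u hu))).congr_deriv (by ring)
  exact constant_of_has_deriv_right_zero (fun u hu ↦ (hW u hu.1).continuousAt.continuousWithinAt)
    (fun u hu ↦ (hW u hu.1).hasDerivWithinAt) t ⟨ht, le_rfl⟩

theorem eq_zero_of_tendsto_of_hasDerivAt {P P' : ℝ → ℝ} {L c : ℝ}
    (hP : ∀ᶠ t in atTop, HasDerivAt P (P' t) t) (hPL : Tendsto P atTop (𝓝 L))
    (hP'c : Tendsto P' atTop (𝓝 c)) : c = 0 := by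
  obtain ⟨t₀, ht₀⟩ := eventually_atTop.1 hP
  have hmvt (T : ℝ) : ∃ ξ, t₀ ≤ T → T < ξ ∧ P' ξ = P (T + 1) - P T := by
    by_cases hT : t₀ ≤ T
    · obtain ⟨ξ, hξ, hslope⟩ := exists_hasDerivAt_eq_slope P P' (lt_add_one T)
        (fun u hu ↦ (ht₀ u (hT.trans hu.1)).continuousAt.continuousWithinAt)
        (fun u hu ↦ ht₀ u (hT.trans hu.1.le))
      exact ⟨ξ, fun _ ↦ ⟨hξ.1, by rw [hslope, add_sub_cancel_left, div_one]⟩⟩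
    · exact ⟨0, fun h ↦ absurd h hT⟩
  choose ξ hξ using hmvt
  have hξ_tendsto : Tendsto ξ atTop atTop :=
    tendsto_atTop_mono' atTop (eventually_atTop.2 ⟨t₀, fun T hT ↦ (hξ T hT).1.le⟩) tendsto_id
  have hdiff : Tendsto (fun T ↦ P (T + 1) - P T) atTop (𝓝 0) := by
    simpa using (hPL.comp (tendsto_atTop_add_const_right _ 1 tendsto_id)).sub hPL
  refine tendsto_nhds_unique ((hP'c.comp hξ_tendsto).congr' ?_) hdiff
  exact eventually_atTop.2 ⟨t₀, fun T hT ↦ (hξ T hT).2⟩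

theorem stmt11 (t₀ : ℝ) (r : ℝ → ℝ) (hr : ContinuousOn r (Ici t₀))
    (hvan : ∀ φ : ℝ → ℝ,
      (∀ t ≥ t₀, HasDerivAt φ (deriv φ t) t) →
      (∀ t ≥ t₀, HasDerivAt (deriv φ) (-(r t * φ t)) t) →
      Tendsto φ atTop (nhds 0)) :
    ∀ φ : ℝ → ℝ,
      (∀ t ≥ t₀, HasDerivAt φ (deriv φ t) t) →
      (∀ t ≥ t₀, HasDerivAt (deriv φ) (-(r t * φ t)) t) →
      (∃ t ≥ t₀, φ t ≠ 0) →
      ¬ ∃ M, ∀ t ≥ t₀, |deriv φ t| ≤ M := by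
  rintro φ hφ hφ' ⟨t₁, ht₁, hφt₁⟩ ⟨M, hM⟩
  have hq : Continuous fun t ↦ r (max t t₀) :=
    hr.comp_continuous (continuous_id.max continuous_const) fun t ↦ le_max_right t t₀
  obtain ⟨ψ, hψt₁, hψ't₁, hψ⟩ := exists_hasDerivAt_deriv_eq_neg_mul hq t₁ 0 1
  have hψ' : ∀ t ≥ t₀, HasDerivAt (deriv ψ) (-(r t * ψ t)) t := fun t ht ↦ by
    simpa [max_eq_left ht] using (hψ t).2
  have hW : ∀ t ≥ t₀, φ t * deriv ψ t - ψ t * deriv φ t = φ t₁ := fun t ht ↦ by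
    rw [wronskian_eq_of_le hφ hφ' (fun t _ ↦ (hψ t).1) hψ' ht,
      ← wronskian_eq_of_le hφ hφ' (fun t _ ↦ (hψ t).1) hψ' ht₁, hψt₁, hψ't₁]
    ring
  have hP : ∀ᶠ t in atTop, HasDerivAt (fun t ↦ φ t * ψ t) (φ t₁ + 2 * (ψ t * deriv φ t)) t :=
    eventually_atTop.2 ⟨t₀, fun t ht ↦
      ((hφ t ht).mul (hψ t).1).congr_deriv (by linear_combination hW t ht)⟩
  have hφ0 := hvan φ hφ hφ'
  have hψ0 := hvan ψ (fun t _ ↦ (hψ t).1) hψ'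
  have hψφ' : Tendsto (fun t ↦ ψ t * deriv φ t) atTop (𝓝 0) :=
    hψ0.zero_mul_isBoundedUnder_le ⟨M, eventually_map.2 (eventually_atTop.2 ⟨t₀, hM⟩)⟩
  refine hφt₁ (eq_zero_of_tendsto_of_hasDerivAt hP (by simpa using hφ0.mul hψ0) ?_)
  simpa using (hψφ'.const_mul 2).const_add (φ t₁)
end

section
/- Let a, b be continuous on [t₀,∞) with a(t) ≥ 0. Suppose x₁ and x₂ are two solutions of the Riccati equation x' + a(t)x² + b(t)x + c(t) = 0 on [t₂,∞) with λ = x₁(t₂) - x₂(t₂). Then for all t ≥ t₂ where 1 + λ·μ(t) ≠ 0: x₁(t) = x₂(t) + λ·exp(-∫_{t₂}^t (2a(τ)x₂(τ)+b(τ))dτ) / (1 + λ·μ(t)), where μ(t) = ∫_{t₂}^t a(τ)·exp(-∫_{t₂}^τ (2a(s)x₂(s)+b(s))ds)dτ. -/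
/-!
The difference `y = x₁ - x₂` of two solutions solves the Bernoulli equation
`y' = -(2 a x₂ + b) y - a y²`. With the integrating factor `E = exp ∫ (2 a x₂ + b)` one checks
that `F = y E (1 + λ μ)` satisfies the linear equation `F' = -a y (F - λ)`, and `F(t₂) = λ`.
By uniqueness for linear equations (Grönwall), `F ≡ λ`, which is the formula.
-/

open Set Real

section Primitive

variable {E : Type*} [NormedAddCommGroup E] [NormedSpace ℝ E] {f : ℝ → E} {t₀ T : ℝ}

theorem ContinuousOn.continuousOn_primitive_Icc (hf : ContinuousOn f (Icc t₀ T)) :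
    ContinuousOn (fun u => ∫ s in t₀..u, f s) (Icc t₀ T) := by
  rcases le_or_gt t₀ T with h | h
  · have := intervalIntegral.continuousOn_primitive_interval
      (μ := MeasureTheory.volume) (by rw [uIcc_of_le h]; exact hf.integrableOn_Icc)
    rwa [uIcc_of_le h] at this
  · simp [Icc_eq_empty_of_lt h]

theorem ContinuousOn.hasDerivWithinAt_primitive_Ici [CompleteSpace E] (hf : ContinuousOn f (Icc t₀ T)) {τ : ℝ}
    (hτ : τ ∈ Ico t₀ T) :
    HasDerivWithinAt (fun u => ∫ s in t₀..u, f s) (f τ) (Ici τ) τ := by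
  have hnhds : Icc t₀ T ∈ nhdsWithin τ (Ici τ) :=
    mem_nhdsWithin.2 ⟨Iio T, isOpen_Iio, hτ.2, fun x hx => ⟨hτ.1.trans hx.2, hx.1.le⟩⟩
  refine intervalIntegral.integral_hasDerivWithinAt_right
    ((hf.mono ?_).intervalIntegrable)
    ⟨Icc t₀ T, nhdsWithin_mono τ Ioi_subset_Ici_self hnhds,
      hf.aestronglyMeasurable measurableSet_Icc⟩
    (((hf τ (Ico_subset_Icc_self hτ)).mono_of_mem_nhdsWithin hnhds).mono Ioi_subset_Ici_self)
  rw [uIcc_of_le hτ.1]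
  exact Icc_subset_Icc_right hτ.2.le

theorem eq_zero_of_hasDerivWithinAt_smul_self {A : ℝ → ℝ} (hA : ContinuousOn A (Icc t₀ T))
    (hf : ContinuousOn f (Icc t₀ T))
    (hf' : ∀ τ ∈ Ico t₀ T, HasDerivWithinAt f (A τ • f τ) (Ici τ) τ) (h₀ : f t₀ = 0) :
    ∀ t ∈ Icc t₀ T, f t = 0 := by
  obtain ⟨K, hK⟩ := isCompact_Icc.exists_bound_of_continuousOn hA
  refine eq_zero_of_abs_deriv_le_mul_abs_self_of_eq_zero_right (K := K) hf hf' h₀ fun τ hτ => ?_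
  rw [norm_smul]
  exact mul_le_mul_of_nonneg_right (hK τ (Ico_subset_Icc_self hτ)) (norm_nonneg _)

end Primitive

section Riccati

variable {a b c x₁ x₂ : ℝ → ℝ}

theorem hasDerivWithinAt_riccati_invariant {I M : ℝ → ℝ} {s : Set ℝ} {τ l : ℝ}
    (hx₁ : HasDerivAt x₁ (-(a τ * x₁ τ ^ 2 + b τ * x₁ τ + c τ)) τ)
    (hx₂ : HasDerivAt x₂ (-(a τ * x₂ τ ^ 2 + b τ * x₂ τ + c τ)) τ)
    (hI : HasDerivWithinAt I (2 * a τ * x₂ τ + b τ) s τ)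
    (hM : HasDerivWithinAt M (a τ * exp (-I τ)) s τ) :
    HasDerivWithinAt (fun u => (x₁ u - x₂ u) * exp (I u) * (1 + l * M u) - l)
      (a τ * (x₂ τ - x₁ τ) * ((x₁ τ - x₂ τ) * exp (I τ) * (1 + l * M τ) - l)) s τ := by
  refine ((((hx₁.sub hx₂).hasDerivWithinAt.mul hI.exp).mul
    ((hM.const_mul l).const_add 1)).sub_const l).congr_deriv ?_
  simp only [Pi.mul_apply, Pi.sub_apply, exp_neg]
  field_simp
  ring

theorem riccati_invariant_eq {t₂ T l : ℝ} (ha : ContinuousOn a (Icc t₂ T))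
    (hb : ContinuousOn b (Icc t₂ T))
    (hx₁ : ∀ t ∈ Icc t₂ T, HasDerivAt x₁ (-(a t * x₁ t ^ 2 + b t * x₁ t + c t)) t)
    (hx₂ : ∀ t ∈ Icc t₂ T, HasDerivAt x₂ (-(a t * x₂ t ^ 2 + b t * x₂ t + c t)) t)
    (hl : l = x₁ t₂ - x₂ t₂) (hT : t₂ ≤ T) :
    (x₁ T - x₂ T) * exp (∫ s in t₂..T, 2 * a s * x₂ s + b s) *
      (1 + l * ∫ τ in t₂..T, a τ * exp (-∫ s in t₂..τ, 2 * a s * x₂ s + b s)) = l := by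
  have hx₁c : ContinuousOn x₁ (Icc t₂ T) := fun t ht => (hx₁ t ht).continuousAt.continuousWithinAt
  have hx₂c : ContinuousOn x₂ (Icc t₂ T) := fun t ht => (hx₂ t ht).continuousAt.continuousWithinAt
  have hG : ContinuousOn (fun s => 2 * a s * x₂ s + b s) (Icc t₂ T) := by fun_prop
  have hI := hG.continuousOn_primitive_Icc
  have hm : ContinuousOn (fun τ => a τ * exp (-∫ s in t₂..τ, 2 * a s * x₂ s + b s))
      (Icc t₂ T) := ha.mul (continuous_exp.comp_continuousOn hI.neg)
  have hμ := hm.continuousOn_primitive_Icc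
  have hF := eq_zero_of_hasDerivWithinAt_smul_self (ha.mul (hx₂c.sub hx₁c)) (by fun_prop)
    (fun τ hτ => hasDerivWithinAt_riccati_invariant (l := l) (hx₁ τ (Ico_subset_Icc_self hτ))
      (hx₂ τ (Ico_subset_Icc_self hτ)) (hG.hasDerivWithinAt_primitive_Ici hτ)
      (hm.hasDerivWithinAt_primitive_Ici hτ))
    (by simp [hl]) T ⟨hT, le_rfl⟩
  exact sub_eq_zero.1 hF

end Riccati

theorem stmt19_general (t₀ t₂ : ℝ) (ht : t₀ ≤ t₂) (a b c x₁ x₂ : ℝ → ℝ)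
    (ha : ContinuousOn a (Ici t₀)) (hb : ContinuousOn b (Ici t₀))
    (hx₁ : ∀ t ≥ t₂, HasDerivAt x₁ (-(a t * x₁ t ^ 2 + b t * x₁ t + c t)) t)
    (hx₂ : ∀ t ≥ t₂, HasDerivAt x₂ (-(a t * x₂ t ^ 2 + b t * x₂ t + c t)) t)
    (l : ℝ) (hl : l = x₁ t₂ - x₂ t₂)
    (μ : ℝ → ℝ)
    (hμ : μ = fun t => ∫ τ in t₂..t,
      a τ * Real.exp (-∫ s in t₂..τ, 2 * a s * x₂ s + b s)) :
    ∀ t ≥ t₂, 1 + l * μ t ≠ 0 →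
      x₁ t = x₂ t +
        l * Real.exp (-∫ τ in t₂..t, 2 * a τ * x₂ τ + b τ) / (1 + l * μ t) := by
  intro T hT hden
  have hsub : Icc t₂ T ⊆ Ici t₀ := fun s hs => ht.trans hs.1
  have key := riccati_invariant_eq (c := c) (ha.mono hsub) (hb.mono hsub)
    (fun t h => hx₁ t h.1) (fun t h => hx₂ t h.1) hl hT
  subst hμ
  rw [exp_neg]
  field_simp
  linear_combination key

theorem stmt19 (t₀ t₂ : ℝ) (ht : t₀ ≤ t₂) (a b c x₁ x₂ : ℝ → ℝ)
    (ha : ContinuousOn a (Ici t₀)) (hb : ContinuousOn b (Ici t₀))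
    (hc : ContinuousOn c (Ici t₀))
    (ha0 : ∀ t ≥ t₀, 0 ≤ a t)
    (hx₁ : ∀ t ≥ t₂, HasDerivAt x₁ (-(a t * x₁ t ^ 2 + b t * x₁ t + c t)) t)
    (hx₂ : ∀ t ≥ t₂, HasDerivAt x₂ (-(a t * x₂ t ^ 2 + b t * x₂ t + c t)) t)
    (l : ℝ) (hl : l = x₁ t₂ - x₂ t₂)
    (μ : ℝ → ℝ)
    (hμ : μ = fun t => ∫ τ in t₂..t,
      a τ * Real.exp (-∫ s in t₂..τ, 2 * a s * x₂ s + b s)) :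
    ∀ t ≥ t₂, 1 + l * μ t ≠ 0 →
      x₁ t = x₂ t +
        l * Real.exp (-∫ τ in t₂..t, 2 * a τ * x₂ τ + b τ) / (1 + l * μ t) :=
  stmt19_general t₀ t₂ ht a b c x₁ x₂ ha hb hx₁ hx₂ l hl μ hμ
end
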